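/- arXiv:1211.2250 — 2 statements merged into one kernel-verified Lean document; each statement's English description precedes it below -/
import Mathlib

section
/- If Λ ⊆ ℝ^d is uniformly discrete and there exists a finite set F ⊆ ℝ^d with Λ − Λ ⊆ Λ + F, then Λ − Λ is uniformly discrete. -/
/-! Applying the hypothesis twice, every difference of two elements of `Λ - Λ` lies in `Λ + G`
with `G = F + (F - F)` finite. A translate of the uniformly discrete
set `Λ` meets a small ball around `0` in at most one point, so `Λ + G` meets it in finitely many
points, and the nonzero ones stay at a positive distance from `0`. -/

open Pointwise

def UnifDiscrete {d : ℕ} (S : Set (EuclideanSpace ℝ (Fin d))) : Prop :=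
  ∃ r > 0, ∀ x ∈ S, ∀ y ∈ S, x ≠ y → r ≤ dist x y

open Metric

theorem Set.sub_sub_sub_subset_add_add_sub {α : Type*} [AddCommGroup α] {Λ F : Set α}
    (h : Λ - Λ ⊆ Λ + F) : (Λ - Λ) - (Λ - Λ) ⊆ Λ + (F + (F - F)) :=
  calc (Λ - Λ) - (Λ - Λ) ⊆ (Λ + F) - (Λ + F) := Set.sub_subset_sub h h
    _ = (Λ - Λ) + (F - F) := add_sub_add_comm _ _ _ _
    _ ⊆ (Λ + F) + (F - F) := Set.add_subset_add_right h
    _ = Λ + (F + (F - F)) := add_assoc _ _ _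

section Separated

variable {r : ℝ}

theorem subsingleton_inter_ball_of_forall_le_dist {X : Type*} [PseudoMetricSpace X] {S : Set X}
    (hS : ∀ x ∈ S, ∀ y ∈ S, x ≠ y → r ≤ dist x y) (c : X) :
    (S ∩ ball c (r / 2)).Subsingleton := by
  rintro x ⟨hx, hxc⟩ y ⟨hy, hyc⟩
  by_contra hxy
  have := dist_triangle_right x y c
  linarith [hS x hx y hy hxy, mem_ball.mp hxc, mem_ball.mp hyc]

theorem finite_add_inter_ball_of_forall_le_dist {E : Type*} [SeminormedAddCommGroup E]
    {S G : Set E} (hS : ∀ x ∈ S, ∀ y ∈ S, x ≠ y → r ≤ dist x y) (hG : G.Finite) (c : E) :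
    ((S + G) ∩ ball c (r / 2)).Finite := by
  refine (hG.biUnion fun g _ =>
    ((subsingleton_inter_ball_of_forall_le_dist hS (c - g)).finite.image (· + g))).subset ?_
  rintro _ ⟨⟨a, ha, g, hg, rfl⟩, hc⟩
  refine Set.mem_biUnion hg ⟨a, ⟨ha, ?_⟩, rfl⟩
  rwa [mem_ball, dist_eq_norm, sub_sub_eq_add_sub, ← dist_eq_norm, ← mem_ball]

theorem exists_forall_le_dist_of_finite_sub_inter_ball {E : Type*} [NormedAddCommGroup E]
    {D : Set E} {ρ : ℝ} (hρ : 0 < ρ) (hD : ((D - D) ∩ ball 0 ρ).Finite) :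
    ∃ r > 0, ∀ x ∈ D, ∀ y ∈ D, x ≠ y → r ≤ dist x y := by
  obtain ⟨ε, hε, hball⟩ : ∃ ε > 0, ball (0 : E) ε ⊆ (((D - D) ∩ ball 0 ρ) \ {0})ᶜ :=
    isOpen_iff.mp hD.sdiff.isClosed.isOpen_compl 0 (by simp)
  refine ⟨min ρ ε, lt_min hρ hε, fun x hx y hy hxy => le_of_not_gt fun hlt => ?_⟩
  rw [dist_eq_norm] at hlt
  refine hball (mem_ball_zero_iff.mpr (hlt.trans_le (min_le_right _ _)))
    ⟨⟨Set.sub_mem_sub hx hy, mem_ball_zero_iff.mpr (hlt.trans_le (min_le_left _ _))⟩, ?_⟩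
  simpa [sub_eq_zero] using hxy

end Separated

theorem stmt2 {d : ℕ} (Λ F : Set (EuclideanSpace ℝ (Fin d)))
    (hΛ : UnifDiscrete Λ) (hF : F.Finite) (h : Λ - Λ ⊆ Λ + F) :
    UnifDiscrete (Λ - Λ) := by
  obtain ⟨r, hr, hsep⟩ := hΛ
  refine exists_forall_le_dist_of_finite_sub_inter_ball (half_pos hr) ?_
  exact (finite_add_inter_ball_of_forall_le_dist hsep (hF.add (hF.sub hF)) 0).subset
    (Set.inter_subset_inter_left _ (Set.sub_sub_sub_subset_add_add_sub h))
end

section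
/- For every real β in the ℤ-module (1/√5)·ℤ[φ] (i.e., β = (a + bφ)/√5 with a, b ∈ ℤ), the distance from βφ^n to the nearest integer tends to 0 as n → ∞, where φ = (1+√5)/2. -/
/-!
By Binet's formula `Fₙ = (φⁿ - ψⁿ) / √5` with `ψ = 1 - φ`, the number `β φⁿ` for
`β = (a + b φ) / √5` differs from the integer `a Fₙ + b Fₙ₊₁` by `(a + b ψ) / √5 · ψⁿ`,
which tends to `0` because `|ψ| < 1`.
-/

open Filter Topology

noncomputable def φ : ℝ := (1 + Real.sqrt 5) / 2

lemma abs_goldenConj_lt_one : |Real.goldenConj| < 1 :=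
  abs_lt.mpr ⟨Real.neg_one_lt_goldenConj, Real.goldenConj_neg.trans one_pos⟩

lemma goldenRatio_pow_mul_sub_fib (a b : ℝ) (n : ℕ) :
    (a + b * Real.goldenRatio) / Real.sqrt 5 * Real.goldenRatio ^ n
      - (a * Nat.fib n + b * Nat.fib (n + 1))
      = (a + b * Real.goldenConj) / Real.sqrt 5 * Real.goldenConj ^ n := by
  rw [Real.coe_fib_eq, Real.coe_fib_eq]
  ring

lemma tendsto_abs_sub_round_of_tendsto_sub_int {x : ℕ → ℝ} (m : ℕ → ℤ)
    (h : Tendsto (fun n => x n - m n) atTop (𝓝 0)) :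
    Tendsto (fun n => |x n - round (x n)|) atTop (𝓝 0) := by
  have habs : Tendsto (fun n => |x n - m n|) atTop (𝓝 0) := by
    simpa using h.abs
  exact squeeze_zero (fun n => abs_nonneg _) (fun n => round_le (x n) (m n)) habs

theorem stmt8 (β : ℝ) (h : ∃ a b : ℤ, β = (a + b * φ) / Real.sqrt 5) :
    Filter.Tendsto (fun n : ℕ => |β * φ ^ n - round (β * φ ^ n)|)
      Filter.atTop (nhds 0) := by
  obtain ⟨a, b, rfl⟩ := h
  apply tendsto_abs_sub_round_of_tendsto_sub_int (fun n => a * Nat.fib n + b * Nat.fib (n + 1))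
  have hdiff : ∀ n : ℕ, (a + b * φ) / Real.sqrt 5 * φ ^ n
      - ((a * Nat.fib n + b * Nat.fib (n + 1) : ℤ) : ℝ)
      = (a + b * Real.goldenConj) / Real.sqrt 5 * Real.goldenConj ^ n := by
    intro n
    push_cast
    exact goldenRatio_pow_mul_sub_fib a b n
  simp only [hdiff]
  simpa using (tendsto_pow_atTop_nhds_zero_of_abs_lt_one abs_goldenConj_lt_one).const_mul _
end
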